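/- A derivation ϑ = ϑ^λ∂_λ + ϑ^i∂_i + Σ_{0<|Λ|} ϑ^i_Λ ∂^Λ_i of the ℝ-ring O⁰_∞ is contact if and only if it takes the form ϑ = ϑ^λ∂_λ + ϑ^i∂_i + Σ_{|Λ|>0} [d_Λ(ϑ^i − y^i_μ ϑ^μ) + y^i_{μ+Λ} ϑ^μ] ∂^Λ_i, i.e., it is the infinite order jet prolongation of the generalized vector field υ = ϑ^λ∂_λ + ϑ^i∂_i. -/

import Mathlib

/-!
A coordinate model of the differential calculus on the infinite order jet
manifold of a fiber bundle `Y → X` with `n`-dimensional base and fibre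
coordinates indexed by `ι`.

* Adapted jet coordinates: the base coordinates `x^λ`, `λ : Fin n`, and the
  jet coordinates `y^i_Λ` indexed by `i : ι` and a symmetric multi-index
  `Λ : Multiset (Fin n)` (with `Λ = 0` giving the fibre coordinates `y^i`).
* `JetRing n ι` models the ring `O⁰_∞` of functions of finitely many jet
  coordinates (polynomial model).
* `totalDeriv lam` is the total derivative
  `d_λ = ∂_λ + Σ_Λ y^i_{λ+Λ} ∂^Λ_i`, and `totalDerivIter l` is
  `d_Λ = d_{λ_r} ∘ ⋯ ∘ d_{λ_1}` for `Λ` presented by the list `l`.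
* `OneForm n ι` models the `O⁰_∞`-module `O¹_∞` with basis `dx^λ`, `dy^i_Λ`;
  `dJet f` is the differential `df = ∂_v f d v`, and
  `contactForm i Λ` is the contact one-form `θ^i_Λ = dy^i_Λ − y^i_{λ+Λ} dx^λ`.
* A derivation `ϑ = ϑ^λ∂_λ + ϑ^i∂_i + Σ ϑ^i_Λ ∂^Λ_i` of `O⁰_∞` is determined by
  its coefficients `υ : JetVar n ι → JetRing n ι`; `lieDeriv υ` is the induced
  Lie derivative `𝐋_ϑ = ϑ⌋d + d(ϑ⌋·)` on one-forms, and `ϑ` is *contact* iff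
  `𝐋_ϑ` preserves the contact ideal, i.e. maps every contact form `θ^i_Λ` into
  the submodule generated by the contact forms.
-/

/-- Jet coordinates: `Sum.inl λ` is the base coordinate `x^λ`;
`Sum.inr (i, Λ)` is the jet coordinate `y^i_Λ`. -/
abbrev JetVar (n : ℕ) (ι : Type*) := (Fin n) ⊕ (ι × Multiset (Fin n))

/-- The ring `O⁰_∞` of functions on finite order jet manifolds (coordinate model). -/
abbrev JetRing (n : ℕ) (ι : Type*) := MvPolynomial (JetVar n ι) ℝ

open MvPolynomial

/-- The total derivative `d_λ = ∂_λ + Σ_{0≤|Λ|} y^i_{λ+Λ} ∂^Λ_i`. -/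
noncomputable def totalDeriv (n : ℕ) (ι : Type*) (lam : Fin n) :
    Derivation ℝ (JetRing n ι) (JetRing n ι) :=
  MvPolynomial.mkDerivation ℝ fun v =>
    match v with
    | Sum.inl μ => if μ = lam then 1 else 0
    | Sum.inr (i, Λ) => X (Sum.inr (i, lam ::ₘ Λ))

/-- The iterated total derivative `d_Λ = d_{λ_r} ∘ ⋯ ∘ d_{λ_1}` for the
multi-index `Λ` presented by a list `l = [λ_r, …, λ_1]`. -/
noncomputable def totalDerivIter (n : ℕ) (ι : Type*) :
    List (Fin n) → JetRing n ι →ₗ[ℝ] JetRing n ι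
  | [] => LinearMap.id
  | lam :: l => (totalDeriv n ι lam).toLinearMap.comp (totalDerivIter n ι l)

/-- The `O⁰_∞`-module `O¹_∞` of one-forms, with basis `{dx^λ, dy^i_Λ}`. -/
abbrev OneForm (n : ℕ) (ι : Type*) := JetVar n ι →₀ JetRing n ι

/-- The differential `df = Σ_v (∂f/∂v) dv` of a function `f ∈ O⁰_∞`. -/
noncomputable def dJet {n : ℕ} {ι : Type*} (f : JetRing n ι) : OneForm n ι :=
  ∑ v ∈ f.vars, Finsupp.single v (pderiv v f)

/-- The contact one-form `θ^i_Λ = dy^i_Λ − y^i_{λ+Λ} dx^λ`. -/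
noncomputable def contactForm {n : ℕ} {ι : Type*} (i : ι) (Λ : Multiset (Fin n)) :
    OneForm n ι :=
  Finsupp.single (Sum.inr (i, Λ)) 1 -
    ∑ lam : Fin n, Finsupp.single (Sum.inl lam) (X (Sum.inr (i, lam ::ₘ Λ)))

/-- The contact ideal (in degree one): the `O⁰_∞`-submodule of `O¹_∞`
generated by the contact forms `θ^i_Λ`. -/
noncomputable def contactSubmodule (n : ℕ) (ι : Type*) : Submodule (JetRing n ι) (OneForm n ι) :=
  Submodule.span (JetRing n ι)
    (Set.range fun p : ι × Multiset (Fin n) => contactForm p.1 p.2)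

/-- The Lie derivative `𝐋_ϑ(Σ_v a_v dv) = Σ_v ϑ(a_v) dv + Σ_v a_v d(ϑ(v))`
on one-forms along the derivation `ϑ` with coefficients `υ`. -/
noncomputable def lieDeriv {n : ℕ} {ι : Type*} (υ : JetVar n ι → JetRing n ι)
    (ω : OneForm n ι) : OneForm n ι :=
  ω.sum fun v a =>
    Finsupp.single v ((MvPolynomial.mkDerivation ℝ υ : Derivation ℝ (JetRing n ι) (JetRing n ι)) a)
      + a • dJet (υ v)

/-- A derivation of `O⁰_∞` (with coefficients `υ`) is *contact* iff its Lie
derivative preserves the contact ideal of the algebra `O*_∞`. -/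
def IsContactDerivation {n : ℕ} {ι : Type*} (υ : JetVar n ι → JetRing n ι) : Prop :=
  ∀ (i : ι) (Λ : Multiset (Fin n)), lieDeriv υ (contactForm i Λ) ∈ contactSubmodule n ι

/-!
Contraction with the total derivatives detects the contact ideal: `d_μ ⌋ θ^i_Λ = 0`, and
subtracting `Σ_μ (d_μ ⌋ ω) dx^μ` from a one-form `ω` leaves a combination of contact forms,
so `ω` is contact iff `d_μ ⌋ ω = 0` for all `μ`. Since `d_μ ⌋ df = d_μ f`, contracting
`𝐋_ϑ θ^i_Λ` gives `d_μ ϑ^i_Λ − ϑ^i_{μ+Λ} − y^i_{λ+Λ} d_μ ϑ^λ`. Hence `ϑ` is contact iff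
`ϑ^i_{μ+Λ} = d_μ ϑ^i_Λ − y^i_{λ+Λ} d_μ ϑ^λ`, a recursion in `|Λ|` whose solution with given
`ϑ^i` is the prolongation formula: by the Leibniz rule, `d_μ (y^i_{λ+Λ} ϑ^λ)` produces exactly
the correction term.
-/

theorem MvPolynomial.derivation_eq_sum_pderiv_mul {R σ : Type*} [CommSemiring R]
    (D : Derivation R (MvPolynomial σ R) (MvPolynomial σ R)) (f : MvPolynomial σ R) :
    D f = ∑ v ∈ f.vars, pderiv v f * D (X v) := by
  classical
  have sum_apply (E : σ → Derivation R (MvPolynomial σ R) (MvPolynomial σ R)) (g) :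
      (∑ v ∈ f.vars, E v) g = ∑ v ∈ f.vars, E v g := by
    rw [← Derivation.coeFnAddMonoidHom_apply, map_sum, Finset.sum_apply]
    rfl
  have hD : D f = (∑ v ∈ f.vars, D (X v) • pderiv v) f := by
    refine derivation_eq_of_forall_mem_vars fun w hw => ?_
    rw [sum_apply, Finset.sum_eq_single_of_mem w hw fun v _ hvw => ?_]
    · simp
    · simp [pderiv_X_of_ne hvw.symm]
  rw [hD, sum_apply]
  exact Finset.sum_congr rfl fun v _ => mul_comm _ _

theorem List.forall_coe_eq_iff_forall_cons_eq {α β : Type*} {g : Multiset α → β}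
    {p : List α → β} {step : Multiset α → α → β → β} (h_nil : p [] = g 0)
    (h_cons : ∀ a l, p (a :: l) = step l a (p l)) :
    (∀ l : List α, g l = p l) ↔ ∀ Λ a, g (a ::ₘ Λ) = step Λ a (g Λ) := by
  constructor
  · intro h Λ a
    induction Λ using Quotient.inductionOn with
    | h l => exact (h (a :: l)).trans ((h_cons a l).trans (congrArg _ (h l).symm))
  · intro h l
    induction l with
    | nil => exact h_nil.symm
    | cons a l ih => exact (h l a).trans ((congrArg _ ih).trans (h_cons a l).symm)

section Contact

open Finsupp

variable {n : ℕ} {ι : Type*}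

theorem totalDeriv_X_inl (lam μ : Fin n) :
    totalDeriv n ι lam (X (Sum.inl μ)) = if μ = lam then 1 else 0 :=
  mkDerivation_X _ _ _

theorem totalDeriv_X_inr (lam : Fin n) (i : ι) (Λ : Multiset (Fin n)) :
    totalDeriv n ι lam (X (Sum.inr (i, Λ))) = X (Sum.inr (i, lam ::ₘ Λ)) :=
  mkDerivation_X _ _ _

/-- The interior product `d_μ ⌋ ω` of a one-form with the total derivative `d_μ`. -/
noncomputable def contractTotalDeriv (μ : Fin n) : OneForm n ι →ₗ[JetRing n ι] JetRing n ι :=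
  linearCombination (JetRing n ι) fun v => totalDeriv n ι μ (X v)

theorem contractTotalDeriv_single (μ : Fin n) (v : JetVar n ι) (a : JetRing n ι) :
    contractTotalDeriv μ (single v a) = a * totalDeriv n ι μ (X v) :=
  linearCombination_single _ _ _

theorem contractTotalDeriv_dJet (μ : Fin n) (f : JetRing n ι) :
    contractTotalDeriv μ (dJet f) = totalDeriv n ι μ f := by
  rw [dJet, map_sum, derivation_eq_sum_pderiv_mul (totalDeriv n ι μ) f]
  exact Finset.sum_congr rfl fun v _ => contractTotalDeriv_single μ v _

theorem contractTotalDeriv_contactForm (μ : Fin n) (i : ι) (Λ : Multiset (Fin n)) :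
    contractTotalDeriv μ (contactForm i Λ) = 0 := by
  simp [contactForm, contractTotalDeriv_single, totalDeriv_X_inl, totalDeriv_X_inr]

noncomputable def horizontalPart : OneForm n ι →ₗ[JetRing n ι] OneForm n ι :=
  ∑ μ : Fin n, (lsingle (Sum.inl μ)).comp (contractTotalDeriv μ)

theorem horizontalPart_apply (ω : OneForm n ι) :
    horizontalPart ω = ∑ μ : Fin n, single (Sum.inl μ) (contractTotalDeriv μ ω) := by
  simp [horizontalPart]

theorem horizontalPart_single_inl (lam : Fin n) (a : JetRing n ι) :
    horizontalPart (single (Sum.inl lam) a) = single (Sum.inl lam) a := by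
  simp only [horizontalPart_apply, contractTotalDeriv_single, totalDeriv_X_inl, mul_ite, mul_one,
    mul_zero]
  rw [Finset.sum_eq_single_of_mem lam (Finset.mem_univ _) fun μ _ hμ => by simp [Ne.symm hμ]]
  simp

theorem horizontalPart_single_inr (i : ι) (Λ : Multiset (Fin n)) (a : JetRing n ι) :
    single (Sum.inr (i, Λ)) a - horizontalPart (single (Sum.inr (i, Λ)) a) =
      a • contactForm i Λ := by
  simp [horizontalPart_apply, contractTotalDeriv_single, totalDeriv_X_inr, contactForm,
    smul_sub, Finset.smul_sum]

theorem sub_horizontalPart_mem_contactSubmodule (ω : OneForm n ι) :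
    ω - horizontalPart ω ∈ contactSubmodule n ι := by
  induction ω using Finsupp.induction_linear with
  | zero => simp
  | add ω₁ ω₂ h₁ h₂ =>
    rw [map_add, add_sub_add_comm]
    exact add_mem h₁ h₂
  | single v a =>
    rcases v with lam | ⟨i, Λ⟩
    · simp [horizontalPart_single_inl]
    · rw [horizontalPart_single_inr]
      exact Submodule.smul_mem _ _ (Submodule.subset_span ⟨(i, Λ), rfl⟩)

theorem mem_contactSubmodule_iff (ω : OneForm n ι) :
    ω ∈ contactSubmodule n ι ↔ ∀ μ : Fin n, contractTotalDeriv μ ω = 0 := by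
  constructor
  · intro hω μ
    have hle : contactSubmodule n ι ≤ LinearMap.ker (contractTotalDeriv μ) := by
      rw [contactSubmodule, Submodule.span_le]
      rintro _ ⟨⟨i, Λ⟩, rfl⟩
      exact contractTotalDeriv_contactForm μ i Λ
    exact hle hω
  · intro hω
    simpa [horizontalPart_apply, hω] using sub_horizontalPart_mem_contactSubmodule ω

variable (υ : JetVar n ι → JetRing n ι)

theorem lieDeriv_single (v : JetVar n ι) (a : JetRing n ι) :
    lieDeriv υ (single v a) =
      single v ((mkDerivation ℝ υ : Derivation ℝ (JetRing n ι) (JetRing n ι)) a)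
        + a • dJet (υ v) :=
  sum_single_index (by simp)

@[simps]
noncomputable def lieDerivAddHom : OneForm n ι →+ OneForm n ι where
  toFun := lieDeriv υ
  map_zero' := sum_zero_index
  map_add' _ _ := sum_add_index' (fun _ => by simp) fun v a b => by
    rw [map_add, single_add, add_smul, add_add_add_comm]

theorem contractTotalDeriv_lieDeriv_single (μ : Fin n) (v : JetVar n ι) (a : JetRing n ι) :
    contractTotalDeriv μ (lieDeriv υ (single v a)) =
      (mkDerivation ℝ υ : Derivation ℝ (JetRing n ι) (JetRing n ι)) a * totalDeriv n ι μ (X v)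
        + a * totalDeriv n ι μ (υ v) := by
  rw [lieDeriv_single, map_add, map_smul, contractTotalDeriv_single, contractTotalDeriv_dJet,
    smul_eq_mul]

/-- `d_μ f − y^i_{λ+Λ} d_μ ϑ^λ`; the contact recursion reads
`ϑ^i_{μ+Λ} = prolongationStep υ i Λ μ ϑ^i_Λ`. -/
noncomputable def prolongationStep (i : ι) (Λ : Multiset (Fin n)) (μ : Fin n)
    (f : JetRing n ι) : JetRing n ι :=
  totalDeriv n ι μ f -
    ∑ lam : Fin n, X (Sum.inr (i, lam ::ₘ Λ)) * totalDeriv n ι μ (υ (Sum.inl lam))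

theorem contractTotalDeriv_lieDeriv_contactForm (μ : Fin n) (i : ι) (Λ : Multiset (Fin n)) :
    contractTotalDeriv μ (lieDeriv υ (contactForm i Λ)) =
      prolongationStep υ i Λ μ (υ (Sum.inr (i, Λ))) - υ (Sum.inr (i, μ ::ₘ Λ)) := by
  change contractTotalDeriv μ (lieDerivAddHom υ (contactForm i Λ)) = _
  simp only [contactForm, map_sub, map_sum, lieDerivAddHom_apply,
    contractTotalDeriv_lieDeriv_single, totalDeriv_X_inl, mkDerivation_X,
    Derivation.map_one_eq_zero, zero_mul, one_mul, zero_add, mul_ite, mul_one, mul_zero,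
    Finset.sum_add_distrib, Finset.sum_ite_eq', Finset.mem_univ, if_true, prolongationStep]
  ring

theorem isContactDerivation_iff_forall_cons_eq :
    IsContactDerivation υ ↔ ∀ (i : ι) (Λ : Multiset (Fin n)) (μ : Fin n),
      υ (Sum.inr (i, μ ::ₘ Λ)) = prolongationStep υ i Λ μ (υ (Sum.inr (i, Λ))) := by
  simp only [IsContactDerivation, mem_contactSubmodule_iff,
    contractTotalDeriv_lieDeriv_contactForm, sub_eq_zero]
  exact forall_congr' fun _ => forall_congr' fun _ => forall_congr' fun _ => eq_comm

/-- The vertical part `ϑ^i − y^i_μ ϑ^μ` of the generalized vector field `ϑ^λ∂_λ + ϑ^i∂_i`. -/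
noncomputable def verticalCoeff (i : ι) : JetRing n ι :=
  υ (Sum.inr (i, 0)) - ∑ μ : Fin n, X (Sum.inr (i, {μ})) * υ (Sum.inl μ)

/-- The coefficient `d_Λ(ϑ^i − y^i_μ ϑ^μ) + y^i_{μ+Λ} ϑ^μ` of `∂^Λ_i` in the jet prolongation. -/
noncomputable def prolongationCoeff (i : ι) (l : List (Fin n)) : JetRing n ι :=
  totalDerivIter n ι l (verticalCoeff υ i)
    + ∑ μ : Fin n, X (Sum.inr (i, μ ::ₘ (l : Multiset (Fin n)))) * υ (Sum.inl μ)

theorem prolongationCoeff_nil (i : ι) : prolongationCoeff υ i [] = υ (Sum.inr (i, 0)) := by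
  simp [prolongationCoeff, verticalCoeff, totalDerivIter]

theorem prolongationCoeff_cons (i : ι) (μ : Fin n) (l : List (Fin n)) :
    prolongationCoeff υ i (μ :: l) = prolongationStep υ i l μ (prolongationCoeff υ i l) := by
  have h_leibniz (lam : Fin n) :
      totalDeriv n ι μ (X (Sum.inr (i, lam ::ₘ (l : Multiset (Fin n)))) * υ (Sum.inl lam)) =
        X (Sum.inr (i, lam ::ₘ μ ::ₘ (l : Multiset (Fin n)))) * υ (Sum.inl lam)
          + X (Sum.inr (i, lam ::ₘ (l : Multiset (Fin n)))) *
              totalDeriv n ι μ (υ (Sum.inl lam)) := by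
    rw [Derivation.leibniz, totalDeriv_X_inr, Multiset.cons_swap, smul_eq_mul, smul_eq_mul]
    ring
  simp only [prolongationCoeff, prolongationStep, totalDerivIter, LinearMap.comp_apply,
    Derivation.coeFn_coe, map_add, map_sum, h_leibniz, Finset.sum_add_distrib,
    ← Multiset.cons_coe]
  ring

end Contact

/-- **Theorem (B\"acklund).** A derivation
`ϑ = ϑ^λ∂_λ + ϑ^i∂_i + Σ_{0<|Λ|} ϑ^i_Λ ∂^Λ_i` of the `ℝ`-ring `O⁰_∞`
(with coefficients `υ`: `ϑ^λ = υ (inl λ)`, `ϑ^i_Λ = υ (inr (i, Λ))`) is contact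
if and only if it takes the form
`ϑ = ϑ^λ∂_λ + ϑ^i∂_i + Σ_{|Λ|>0} [d_Λ(ϑ^i − y^i_μ ϑ^μ) + y^i_{μ+Λ} ϑ^μ] ∂^Λ_i`,
i.e. it is the infinite order jet prolongation of the generalized vector field
`υ = ϑ^λ∂_λ + ϑ^i∂_i`.  (Every symmetric multi-index `Λ` is presented by a
list `l`, over which the iterated total derivative `d_Λ` is computed.) -/
theorem isContactDerivation_iff_jet_prolongation
    (n : ℕ) (ι : Type*) (υ : JetVar n ι → JetRing n ι) :
    IsContactDerivation υ ↔
      ∀ (i : ι) (l : List (Fin n)),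
        υ (Sum.inr (i, (l : Multiset (Fin n)))) =
          totalDerivIter n ι l
            (υ (Sum.inr (i, (0 : Multiset (Fin n)))) -
              ∑ μ : Fin n, X (Sum.inr (i, ({μ} : Multiset (Fin n)))) * υ (Sum.inl μ))
          + ∑ μ : Fin n, X (Sum.inr (i, μ ::ₘ (l : Multiset (Fin n)))) * υ (Sum.inl μ) := by
  rw [isContactDerivation_iff_forall_cons_eq]
  exact forall_congr' fun i => (List.forall_coe_eq_iff_forall_cons_eq
    (g := fun Λ => υ (Sum.inr (i, Λ))) (prolongationCoeff_nil υ i)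
    (prolongationCoeff_cons υ i)).symm
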